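/- Let M = F × B carry the twisted product metric g = g_F + e^{2f}g_B for a smooth function f: M → ℝ, let D1, D2 be the lifts to M of two complementary orthogonal distributions N1, N2 on (F,g_F), and let D3 be the lift of TB. Then the distributions D1, D2, D3 are pairwise mixed integrable and pairwise mixed totally geodesic. Moreover, if N1 and N2 are integrable, then D1, D2, D3 are all integrable. -/

import Mathlib

open scoped BigOperators
noncomputable section

/-- An abstract model of the ℝ-module of smooth vector fields on a manifold `M`,
together with multiplication by smooth functions, the Lie bracket and the
directional derivative of smooth functions along vector fields. -/
structure SmoothVF (M : Type) where
  /-- the space of smooth vector fields -/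
  VF : Type
  [vfAdd : AddCommGroup VF]
  [vfMod : Module ℝ VF]
  /-- multiplication of a vector field by a smooth function -/
  fsmul : (M → ℝ) → VF → VF
  /-- Lie bracket of vector fields -/
  bracket : VF → VF → VF
  /-- directional derivative of a smooth function along a vector field -/
  dd : VF → (M → ℝ) → (M → ℝ)
  fsmul_one : ∀ X : VF, fsmul 1 X = X
  fsmul_mul : ∀ (f₁ f₂ : M → ℝ) (X : VF), fsmul (f₁ * f₂) X = fsmul f₁ (fsmul f₂ X)
  fsmul_add : ∀ (f : M → ℝ) (X Y : VF), fsmul f (X + Y) = fsmul f X + fsmul f Y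
  add_fsmul : ∀ (f₁ f₂ : M → ℝ) (X : VF), fsmul (f₁ + f₂) X = fsmul f₁ X + fsmul f₂ X
  fsmul_const : ∀ (r : ℝ) (X : VF), fsmul (fun _ => r) X = r • X
  bracket_skew : ∀ X Y : VF, bracket X Y = - bracket Y X
  bracket_add_left : ∀ X Y Z : VF, bracket (X + Y) Z = bracket X Z + bracket Y Z
  dd_add : ∀ (X : VF) (f₁ f₂ : M → ℝ), dd X (f₁ + f₂) = dd X f₁ + dd X f₂
  dd_mul : ∀ (X : VF) (f₁ f₂ : M → ℝ), dd X (f₁ * f₂) = f₁ * dd X f₂ + f₂ * dd X f₁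
  dd_add_left : ∀ (X Y : VF) (f : M → ℝ), dd (X + Y) f = dd X f + dd Y f
  dd_fsmul : ∀ (h : M → ℝ) (X : VF) (f : M → ℝ), dd (fsmul h X) f = h * dd X f
  dd_bracket : ∀ (X Y : VF) (f : M → ℝ), dd (bracket X Y) f = dd X (dd Y f) - dd Y (dd X f)

attribute [instance] SmoothVF.vfAdd SmoothVF.vfMod

/-- A Riemannian metric on the abstract space of vector fields, together with
its Levi-Civita connection (torsion-free and metric-compatible). -/
structure RMetric {M : Type} (V : SmoothVF M) where
  /-- the metric tensor -/
  g : V.VF → V.VF → (M → ℝ)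
  /-- the Levi-Civita connection -/
  nabla : V.VF → V.VF → V.VF
  g_symm : ∀ X Y, g X Y = g Y X
  g_add_left : ∀ X Y Z, g (X + Y) Z = g X Z + g Y Z
  g_fsmul_left : ∀ f X Y, g (V.fsmul f X) Y = f * g X Y
  g_nonneg : ∀ X x, 0 ≤ g X X x
  g_definite : ∀ X, g X X = 0 → X = 0
  nabla_add_left : ∀ X Y Z, nabla (X + Y) Z = nabla X Z + nabla Y Z
  nabla_add_right : ∀ X Y Z, nabla X (Y + Z) = nabla X Y + nabla X Z
  nabla_fsmul_left : ∀ f X Y, nabla (V.fsmul f X) Y = V.fsmul f (nabla X Y)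
  nabla_leibniz : ∀ f X Y, nabla X (V.fsmul f Y) = V.fsmul (V.dd X f) Y + V.fsmul f (nabla X Y)
  torsion_free : ∀ X Y, nabla X Y - nabla Y X = V.bracket X Y
  metric_compat : ∀ X Y Z, V.dd X (g Y Z) = g (nabla X Y) Z + g Y (nabla X Z)

namespace RMetric

variable {M : Type} {V : SmoothVF M} (gm : RMetric V)

/-- The Riemann curvature tensor `R(X,Y)Z = ∇_X∇_Y Z − ∇_Y∇_X Z − ∇_{[X,Y]}Z`. -/
def Rc (X Y Z : V.VF) : V.VF :=
  gm.nabla X (gm.nabla Y Z) - gm.nabla Y (gm.nabla X Z) - gm.nabla (V.bracket X Y) Z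

end RMetric

/-- Three pairwise orthogonal distributions `D₁, D₂, D₃` (indices `0, 1, 2`)
decomposing the tangent bundle, described by their orthoprojectors. -/
structure Split3 {M : Type} {V : SmoothVF M} (gm : RMetric V) where
  /-- the orthoprojector onto the `i`-th distribution -/
  P : Fin 3 → V.VF → V.VF
  P_add : ∀ i X Y, P i (X + Y) = P i X + P i Y
  P_fsmul : ∀ i f X, P i (V.fsmul f X) = V.fsmul f (P i X)
  P_idem : ∀ i X, P i (P i X) = P i X
  P_orth : ∀ i j X, i ≠ j → P i (P j X) = 0
  P_sum : ∀ X, P 0 X + P 1 X + P 2 X = X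
  P_selfadj : ∀ i X Y, gm.g (P i X) Y = gm.g X (P i Y)

namespace Split3

variable {M : Type} {V : SmoothVF M} {gm : RMetric V} (s : Split3 gm)

/-- Orthoprojector onto the orthogonal complement of `D_i`. -/
def Pp (i : Fin 3) (X : V.VF) : V.VF := X - s.P i X

/-- The second fundamental form `h_i` of the distribution `D_i`. -/
def h (i : Fin 3) (X Y : V.VF) : V.VF :=
  (1 / 2 : ℝ) • s.Pp i (gm.nabla (s.P i X) (s.P i Y) + gm.nabla (s.P i Y) (s.P i X))

/-- The integrability tensor `T_i` of the distribution `D_i`. -/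
def T (i : Fin 3) (X Y : V.VF) : V.VF :=
  (1 / 2 : ℝ) • s.Pp i (gm.nabla (s.P i X) (s.P i Y) - gm.nabla (s.P i Y) (s.P i X))

/-- The second fundamental form `h̃_i` of `D_i^⊥`. -/
def ht (i : Fin 3) (X Y : V.VF) : V.VF :=
  (1 / 2 : ℝ) • s.P i (gm.nabla (s.Pp i X) (s.Pp i Y) + gm.nabla (s.Pp i Y) (s.Pp i X))

/-- The integrability tensor `T̃_i` of `D_i^⊥`. -/
def Tt (i : Fin 3) (X Y : V.VF) : V.VF :=
  (1 / 2 : ℝ) • s.P i (gm.nabla (s.Pp i X) (s.Pp i Y) - gm.nabla (s.Pp i Y) (s.Pp i X))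

/-- The mixed second fundamental form `𝔥_{ij}(X,Y) = h̃_k(P_iX,P_jY) + h̃_k(P_jX,P_iY)`,
where `k` is the remaining index. -/
def mh (k i j : Fin 3) (X Y : V.VF) : V.VF :=
  s.ht k (s.P i X) (s.P j Y) + s.ht k (s.P j X) (s.P i Y)

/-- The mixed integrability tensor `𝔗_{ij}(X,Y) = T̃_k(P_iX,P_jY) + T̃_k(P_jX,P_iY)`,
where `k` is the remaining index. -/
def mT (k i j : Fin 3) (X Y : V.VF) : V.VF :=
  s.Tt k (s.P i X) (s.P j Y) + s.Tt k (s.P j X) (s.P i Y)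

/-- Orthoprojector onto `D₁ ⊕ D₂`. -/
def P12 (X : V.VF) : V.VF := s.P 0 X + s.P 1 X

/-- Second fundamental form of `D₁ ⊕ D₂`. -/
def h12 (X Y : V.VF) : V.VF :=
  (1 / 2 : ℝ) • s.P 2 (gm.nabla (s.P12 X) (s.P12 Y) + gm.nabla (s.P12 Y) (s.P12 X))

/-- Integrability tensor of `D₁ ⊕ D₂`. -/
def T12 (X Y : V.VF) : V.VF :=
  (1 / 2 : ℝ) • s.P 2 (gm.nabla (s.P12 X) (s.P12 Y) - gm.nabla (s.P12 Y) (s.P12 X))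

/-- Integrability tensor of `(D₁ ⊕ D₂)^⊥ = D₃`'s complement pair, i.e. `T̃` of `D₁⊕D₂`. -/
def Tt12 (X Y : V.VF) : V.VF :=
  (1 / 2 : ℝ) • s.P12 (gm.nabla (s.P 2 X) (s.P 2 Y) - gm.nabla (s.P 2 Y) (s.P 2 X))

/-- The connection `∇^P_X Y = P ∇_X (P Y)` induced on `D = D₁ ⊕ D₂`. -/
def nablaP (X Y : V.VF) : V.VF := s.P12 (gm.nabla X (s.P12 Y))

/-- The curvature tensor of the induced connection `∇^P`. -/
def RP (X Y Z : V.VF) : V.VF :=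
  s.nablaP X (s.nablaP Y Z) - s.nablaP Y (s.nablaP X Z) - s.nablaP (V.bracket X Y) Z

end Split3

/-- A full Riemannian package on `M`: a metric with its Levi-Civita connection,
three pairwise orthogonal distributions decomposing the tangent bundle,
global orthonormal frames adapted to the distributions, and a volume density. -/
structure Pkg {M : Type} (V : SmoothVF M) where
  /-- the Riemannian metric with its Levi-Civita connection -/
  gm : RMetric V
  /-- the orthoprojectors onto the three distributions -/
  sp : Split3 gm
  /-- index types for the adapted orthonormal frames -/
  ι : Fin 3 → Type
  fint : ∀ i, Fintype (ι i)
  deq : ∀ i, DecidableEq (ι i)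
  /-- an orthonormal frame of the `i`-th distribution -/
  E : ∀ i, ι i → V.VF
  E_mem : ∀ i a, sp.P i (E i a) = E i a
  E_ortho : ∀ i a b, gm.g (E i a) (E i b) = fun _ => @ite ℝ (a = b) (deq i a b) 1 0
  E_span : ∀ i X, sp.P i X = ∑ a ∈ (fint i).elems, V.fsmul (gm.g X (E i a)) (E i a)
  /-- the volume density of the metric (with respect to a reference integral) -/
  dvol : M → ℝ
  dvol_pos : ∀ x, 0 < dvol x

attribute [instance] Pkg.fint Pkg.deq

namespace Pkg

variable {M : Type} {V : SmoothVF M} (p : Pkg V)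

/-- Index type of the full adapted orthonormal frame. -/
def idx : Type := Σ i : Fin 3, p.ι i

instance : Fintype p.idx := inferInstanceAs (Fintype (Σ i : Fin 3, p.ι i))

/-- The full adapted orthonormal frame. -/
def xF (k : p.idx) : V.VF := p.E k.1 k.2

/-- The mean curvature vector `H_i = tr_g h_i` of `D_i`. -/
def H (i : Fin 3) : V.VF := ∑ a : p.ι i, p.sp.h i (p.E i a) (p.E i a)

/-- Divergence of a vector field. -/
def Div (Y : V.VF) : M → ℝ := ∑ k : p.idx, p.gm.g (p.gm.nabla (p.xF k) Y) (p.xF k)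

/-- Divergence of a `(1,2)`-tensor field. -/
def DivT (S : V.VF → V.VF → V.VF) (X Y : V.VF) : M → ℝ :=
  ∑ k : p.idx,
    p.gm.g (p.gm.nabla (p.xF k) (S X Y) - S (p.gm.nabla (p.xF k) X) Y
              - S X (p.gm.nabla (p.xF k) Y)) (p.xF k)

/-- Divergence of a `(1,1)`-tensor field, as a 1-form. -/
def DivOp (S : V.VF → V.VF) (X : V.VF) : M → ℝ :=
  ∑ k : p.idx, p.gm.g (p.gm.nabla (p.xF k) (S X) - S (p.gm.nabla (p.xF k) X)) (p.xF k)

/-- The mutual curvature of the distributions `D_i` and `D_j`. -/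
def Smix (i j : Fin 3) : M → ℝ :=
  ∑ a : p.ι i, ∑ b : p.ι j, p.gm.g (p.gm.Rc (p.E i a) (p.E j b) (p.E j b)) (p.E i a)

/-- The mutual curvature `S_{D₁,D₂}`. -/
def Smut : M → ℝ := p.Smix 0 1

/-- The mixed scalar `P`-curvature `S^P_mix(D₁,D₂)` of the induced connection on `D₁ ⊕ D₂`. -/
def SPmix : M → ℝ :=
  ∑ a : p.ι 0, ∑ b : p.ι 1, p.gm.g (p.sp.RP (p.E 0 a) (p.E 1 b) (p.E 1 b)) (p.E 0 a)

/-- Squared norm of a `(1,2)`-tensor restricted to `D_i × D_j`. -/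
def normRes (S : V.VF → V.VF → V.VF) (i j : Fin 3) : M → ℝ :=
  ∑ a : p.ι i, ∑ b : p.ι j, p.gm.g (S (p.E i a) (p.E j b)) (S (p.E i a) (p.E j b))

/-- Squared norm of a `(1,2)`-tensor. -/
def normT (S : V.VF → V.VF → V.VF) : M → ℝ :=
  ∑ k : p.idx, ∑ l : p.idx, p.gm.g (S (p.xF k) (p.xF l)) (S (p.xF k) (p.xF l))

/-- The gradient of a smooth function. -/
def grad (f : M → ℝ) : V.VF := ∑ k : p.idx, V.fsmul (V.dd (p.xF k) f) (p.xF k)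

/-- The shape operator `A_{i,Z}` of `D_i`, `g(A_{i,Z}X, W) = g(h_i(X,W), Z)`. -/
def Aop (i : Fin 3) (Z X : V.VF) : V.VF :=
  ∑ k : p.idx, V.fsmul (p.gm.g (p.sp.h i X (p.xF k)) Z) (p.xF k)

/-- The shape operator `A_{12,Z}` of `D₁ ⊕ D₂`. -/
def Aop12 (Z X : V.VF) : V.VF :=
  ∑ k : p.idx, V.fsmul (p.gm.g (p.sp.h12 X (p.xF k)) Z) (p.xF k)

/-- The operator `T̃♯_{i,Z}`, `g(T̃♯_{i,Z}X, W) = g(T̃_i(X,W), Z)`. -/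
def Ttop (i : Fin 3) (Z X : V.VF) : V.VF :=
  ∑ k : p.idx, V.fsmul (p.gm.g (p.sp.Tt i X (p.xF k)) Z) (p.xF k)

/-- The operator `T̃♯_{12,Z}` of `D₁ ⊕ D₂`. -/
def Ttop12 (Z X : V.VF) : V.VF :=
  ∑ k : p.idx, V.fsmul (p.gm.g (p.sp.Tt12 X (p.xF k)) Z) (p.xF k)

/-- The action `J_{D₁,D₂}(g) = ∫ S_{D₁,D₂} dvol_g`, with respect to the
reference integral `I`. -/
def J (I : (M → ℝ) →ₗ[ℝ] ℝ) : ℝ := I (p.Smut * p.dvol)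

/-- The modified action `J_{D₁⊂D}(g) = ∫ S_{D₁,D₁^⊥∩D} dvol_g` (here `D₃ = D₁^⊥ ∩ D`). -/
def Jmod (I : (M → ℝ) →ₗ[ℝ] ℝ) : ℝ := I (p.Smix 0 2 * p.dvol)

/-- The volume `Vol(g) = ∫ dvol_g`. -/
def Vol (I : (M → ℝ) →ₗ[ℝ] ℝ) : ℝ := I p.dvol

end Pkg

/-- Two endomorphisms have the same range (as idempotents: each fixes the
image of the other). -/
def SameRange {A : Type} (Q Q' : A → A) : Prop :=
  (∀ X, Q (Q' X) = Q' X) ∧ (∀ X, Q' (Q X) = Q X)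

/-- A smooth 1-parameter variation `g_t` of the Riemannian package `p0`,
with infinitesimal variation tensor `B = ∂ₜ g_t |_{t=0}`. -/
structure Variation {M : Type} {V : SmoothVF M} (p0 : Pkg V) where
  /-- the family of Riemannian packages -/
  Gt : ℝ → Pkg V
  at0 : Gt 0 = p0
  /-- the infinitesimal variation `B = ∂ₜ g_t |_{t=0}` -/
  B : V.VF → V.VF → (M → ℝ)
  derivB : ∀ X Y x, HasDerivAt (fun t => (Gt t).gm.g X Y x) (B X Y x) 0

namespace Variation

variable {M : Type} {V : SmoothVF M} {p0 : Pkg V} (v : Variation p0)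

/-- The variation keeps the distributions `D₁` and `D₂` fixed (and hence
orthogonal); the complement `D₃(t)` may vary. -/
def KeepsD12 : Prop :=
  ∀ t, SameRange ((v.Gt t).sp.P 0) (p0.sp.P 0) ∧ SameRange ((v.Gt t).sp.P 1) (p0.sp.P 1)

/-- Adapted variation: all three distributions stay fixed and pairwise orthogonal. -/
def Adapted : Prop := ∀ t, ∀ i : Fin 3, SameRange ((v.Gt t).sp.P i) (p0.sp.P i)

/-- Volume-preserving variation. -/
def VolPres (I : (M → ℝ) →ₗ[ℝ] ℝ) : Prop := ∀ t, (v.Gt t).Vol I = p0.Vol I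

end Variation

/-! Horizontal lifts commute with vertical ones, the two are `g`-orthogonal, and `g` is basic
on horizontal lifts. Metric compatibility and torsion-freeness then force
`g(∇_X ξ, Y) = g(∇_ξ X, Y) = g(∇_X Y, ξ) = 0` for horizontal `X, Y` and vertical `ξ`, i.e. every
component of `∇_{D_i} D_j` along `D_k` with `i, j, k` distinct vanishes; this is exactly mixed
integrability and mixed total geodesy. Integrability of `D_i` asks that `[D_i, D_i]` have no
component along the other two distributions: brackets of horizontal (vertical) lifts are
horizontal (vertical), and the integrability of `N₁, N₂` controls the horizontal components.
All these quantities are tensorial where they are used, so it suffices to check them on lifted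
fields, which span the vector fields over the smooth functions. -/

theorem Submodule.eq_zero_of_mem_span {R E N : Type*} [Semiring R] [AddCommMonoid E]
    [Module R E] [AddCommGroup N] [Module R N] {G : Set E} {L : E → N}
    (hadd : ∀ x y, L (x + y) = L x + L y)
    (hsmul : ∀ (a : R) x, x ∈ Submodule.span R G → L (a • x) = a • L x)
    (hG : ∀ x ∈ G, L x = 0) {x : E} (hx : x ∈ Submodule.span R G) : L x = 0 := by
  induction hx using Submodule.span_induction with
  | mem x hx => exact hG x hx
  | zero => exact (AddMonoidHom.mk' L hadd).map_zero
  | add x y _ _ hx hy => rw [hadd, hx, hy, add_zero]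
  | smul a x hxG hx => rw [hsmul a x hxG, hx, smul_zero]

namespace SmoothVF

variable {M : Type} (V : SmoothVF M)

instance instModuleFun : Module (M → ℝ) V.VF where
  smul := V.fsmul
  one_smul := V.fsmul_one
  mul_smul := V.fsmul_mul
  smul_zero φ := by
    change V.fsmul φ 0 = 0
    simpa using V.fsmul_add φ 0 0
  smul_add := V.fsmul_add
  add_smul := V.add_fsmul
  zero_smul X := by
    change V.fsmul (fun _ => 0) X = 0
    rw [V.fsmul_const, zero_smul]

variable {V}

theorem smul_eq_fsmul (φ : M → ℝ) (X : V.VF) : φ • X = V.fsmul φ X := rfl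

theorem dd_zero (X : V.VF) : V.dd X 0 = 0 :=
  (AddMonoidHom.mk' (V.dd X) (V.dd_add X)).map_zero

theorem bracket_add_right (X Y Z : V.VF) : V.bracket X (Y + Z) = V.bracket X Y + V.bracket X Z := by
  rw [V.bracket_skew, V.bracket_add_left, neg_add, ← V.bracket_skew, ← V.bracket_skew]

end SmoothVF

namespace RMetric

variable {M : Type} {V : SmoothVF M} (gm : RMetric V)

theorem g_zero_left (Z : V.VF) : gm.g 0 Z = 0 :=
  (AddMonoidHom.mk' (gm.g · Z) (gm.g_add_left · · Z)).map_zero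

theorem g_neg_left (X Z : V.VF) : gm.g (-X) Z = -gm.g X Z :=
  (AddMonoidHom.mk' (gm.g · Z) (gm.g_add_left · · Z)).map_neg X

theorem g_sub_left (X Y Z : V.VF) : gm.g (X - Y) Z = gm.g X Z - gm.g Y Z :=
  (AddMonoidHom.mk' (gm.g · Z) (gm.g_add_left · · Z)).map_sub X Y

theorem g_zero_right (Z : V.VF) : gm.g Z 0 = 0 := by
  rw [gm.g_symm, g_zero_left]

theorem g_bracket_smul_right (φ : M → ℝ) (X Y Z : V.VF) :
    gm.g (V.bracket X (φ • Y)) Z = V.dd X φ * gm.g Y Z + φ * gm.g (V.bracket X Y) Z := by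
  rw [← gm.torsion_free, ← gm.torsion_free, SmoothVF.smul_eq_fsmul, gm.nabla_leibniz,
    gm.nabla_fsmul_left, g_sub_left, g_sub_left, gm.g_add_left, gm.g_fsmul_left,
    gm.g_fsmul_left, gm.g_fsmul_left]
  ring

theorem g_bracket_smul_left (φ : M → ℝ) (X Y Z : V.VF) :
    gm.g (V.bracket (φ • X) Y) Z = -(V.dd Y φ * gm.g X Z) + φ * gm.g (V.bracket X Y) Z := by
  rw [V.bracket_skew, g_neg_left, g_bracket_smul_right, V.bracket_skew Y, g_neg_left]
  ring

variable {G G₁ G₂ : Set V.VF} {X Y Z : V.VF}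

theorem g_eq_zero_of_mem_span (h : ∀ Y ∈ G, gm.g Y Z = 0)
    (hY : Y ∈ Submodule.span (M → ℝ) G) : gm.g Y Z = 0 :=
  Submodule.eq_zero_of_mem_span (L := (gm.g · Z)) (gm.g_add_left · · Z)
    (fun φ Y _ => gm.g_fsmul_left φ Y Z) h hY

theorem g_nabla_eq_zero_of_mem_span (horth : ∀ Y ∈ G₂, gm.g Y Z = 0)
    (h : ∀ X ∈ G₁, ∀ Y ∈ G₂, gm.g (gm.nabla X Y) Z = 0)
    (hX : X ∈ Submodule.span (M → ℝ) G₁) (hY : Y ∈ Submodule.span (M → ℝ) G₂) :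
    gm.g (gm.nabla X Y) Z = 0 := by
  refine Submodule.eq_zero_of_mem_span (L := fun Y => gm.g (gm.nabla X Y) Z)
    (fun Y₁ Y₂ => by rw [gm.nabla_add_right, gm.g_add_left]) (fun φ Y hY => ?_)
    (fun Y hY => ?_) hY
  · rw [smul_eq_mul, SmoothVF.smul_eq_fsmul, gm.nabla_leibniz, gm.g_add_left, gm.g_fsmul_left,
      gm.g_fsmul_left, gm.g_eq_zero_of_mem_span horth hY, mul_zero, zero_add]
  · exact Submodule.eq_zero_of_mem_span (L := fun X => gm.g (gm.nabla X Y) Z)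
      (fun X₁ X₂ => by rw [gm.nabla_add_left, gm.g_add_left])
      (fun φ X _ => by
        rw [SmoothVF.smul_eq_fsmul, gm.nabla_fsmul_left, gm.g_fsmul_left, smul_eq_mul])
      (fun X hX => h X hX Y hY) hX

theorem g_bracket_eq_zero_of_mem_span (horth₁ : ∀ X ∈ G₁, gm.g X Z = 0)
    (horth₂ : ∀ Y ∈ G₂, gm.g Y Z = 0) (h : ∀ X ∈ G₁, ∀ Y ∈ G₂, gm.g (V.bracket X Y) Z = 0)
    (hX : X ∈ Submodule.span (M → ℝ) G₁) (hY : Y ∈ Submodule.span (M → ℝ) G₂) :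
    gm.g (V.bracket X Y) Z = 0 := by
  refine Submodule.eq_zero_of_mem_span (L := fun Y => gm.g (V.bracket X Y) Z)
    (fun Y₁ Y₂ => by rw [V.bracket_add_right, gm.g_add_left])
    (fun φ Y hY => by rw [g_bracket_smul_right, gm.g_eq_zero_of_mem_span horth₂ hY, mul_zero,
      zero_add, smul_eq_mul]) (fun Y hY => ?_) hY
  exact Submodule.eq_zero_of_mem_span (L := fun X => gm.g (V.bracket X Y) Z)
    (fun X₁ X₂ => by rw [V.bracket_add_left, gm.g_add_left])
    (fun φ X hX => by rw [g_bracket_smul_left, gm.g_eq_zero_of_mem_span horth₁ hX, mul_zero,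
      neg_zero, zero_add, smul_eq_mul]) (fun X hX => h X hX Y hY) hX

end RMetric

namespace Split3

variable {M : Type} {V : SmoothVF M} {gm : RMetric V} (s : Split3 gm)

theorem P_zero (i : Fin 3) : s.P i 0 = 0 :=
  (AddMonoidHom.mk' (s.P i) (s.P_add i)).map_zero

theorem P_sub (i : Fin 3) (X Y : V.VF) : s.P i (X - Y) = s.P i X - s.P i Y :=
  (AddMonoidHom.mk' (s.P i) (s.P_add i)).map_sub X Y

theorem Pp_P {i k : Fin 3} (h : i ≠ k) (X : V.VF) : s.Pp k (s.P i X) = s.P i X := by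
  rw [Pp, s.P_orth k i X h.symm, sub_zero]

theorem Pp_eq_zero {i : Fin 3} {W : V.VF} (h : ∀ j, j ≠ i → s.P j W = 0) : s.Pp i W = 0 := by
  have hW := s.P_sum W
  rw [Pp, sub_eq_zero]
  fin_cases i <;> simp only [Fin.zero_eta, Fin.mk_one, Fin.reduceFinMk] at h ⊢ <;>
    nth_rewrite 1 [← hW] <;> simp [h]

theorem g_P_P {i j : Fin 3} (h : i ≠ j) (X Y : V.VF) : gm.g (s.P i X) (s.P j Y) = 0 := by
  rw [s.P_selfadj, s.P_orth i j Y h, gm.g_zero_right]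

theorem P_mem_span {S G : Set V.VF} (hS : ∀ Z, Z ∈ Submodule.span (M → ℝ) S) {m : Fin 3}
    (h : ∀ W ∈ S, s.P m W ∈ Submodule.span (M → ℝ) G) (Z : V.VF) :
    s.P m Z ∈ Submodule.span (M → ℝ) G := by
  induction hS Z using Submodule.span_induction with
  | mem W hW => exact h W hW
  | zero => rw [s.P_zero]; exact Submodule.zero_mem _
  | add X Y _ _ hX hY => rw [s.P_add]; exact Submodule.add_mem _ hX hY
  | smul φ X _ hX => rw [SmoothVF.smul_eq_fsmul, s.P_fsmul]; exact Submodule.smul_mem _ φ hX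

theorem P_eq_zero_of_mem_span {G : Set V.VF} {m : Fin 3}
    (hG : ∀ Z, s.P m Z ∈ Submodule.span (M → ℝ) G) {W : V.VF} (h : ∀ Z ∈ G, gm.g W Z = 0) :
    s.P m W = 0 := by
  refine gm.g_definite _ ?_
  rw [s.P_selfadj, s.P_idem, gm.g_symm]
  exact gm.g_eq_zero_of_mem_span (fun Z hZ => by rw [gm.g_symm, h Z hZ]) (hG W)

theorem mT_eq_zero {i j k : Fin 3} (hik : i ≠ k) (hjk : j ≠ k)
    (hij : ∀ X Y, s.P k (gm.nabla (s.P i X) (s.P j Y)) = 0)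
    (hji : ∀ X Y, s.P k (gm.nabla (s.P j X) (s.P i Y)) = 0) (X Y : V.VF) :
    s.mT k i j X Y = 0 := by
  simp only [mT, Tt, s.Pp_P hik, s.Pp_P hjk, s.P_sub, hij, hji, sub_zero, smul_zero, add_zero]

theorem mh_eq_zero {i j k : Fin 3} (hik : i ≠ k) (hjk : j ≠ k)
    (hij : ∀ X Y, s.P k (gm.nabla (s.P i X) (s.P j Y)) = 0)
    (hji : ∀ X Y, s.P k (gm.nabla (s.P j X) (s.P i Y)) = 0) (X Y : V.VF) :
    s.mh k i j X Y = 0 := by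
  simp only [mh, ht, s.Pp_P hik, s.Pp_P hjk, s.P_add, hij, hji, add_zero, smul_zero]

theorem mixed_integrable_and_mixed_totally_geodesic
    (h : ∀ i j k, i ≠ j → i ≠ k → j ≠ k → ∀ X Y, s.P k (gm.nabla (s.P i X) (s.P j Y)) = 0) :
    (∀ X Y, s.mT 2 0 1 X Y = 0) ∧ (∀ X Y, s.mT 1 0 2 X Y = 0) ∧ (∀ X Y, s.mT 0 1 2 X Y = 0)
      ∧ (∀ X Y, s.mh 2 0 1 X Y = 0) ∧ (∀ X Y, s.mh 1 0 2 X Y = 0)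
      ∧ (∀ X Y, s.mh 0 1 2 X Y = 0) := by
  refine ⟨?_, ?_, ?_, ?_, ?_, ?_⟩ <;>
    first
    | exact s.mT_eq_zero (by decide) (by decide) (h _ _ _ (by decide) (by decide) (by decide))
        (h _ _ _ (by decide) (by decide) (by decide))
    | exact s.mh_eq_zero (by decide) (by decide) (h _ _ _ (by decide) (by decide) (by decide))
        (h _ _ _ (by decide) (by decide) (by decide))

theorem T_eq_zero {i : Fin 3}
    (h : ∀ j, j ≠ i → ∀ X Y, s.P j (V.bracket (s.P i X) (s.P i Y)) = 0) (X Y : V.VF) :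
    s.T i X Y = 0 := by
  rw [T, gm.torsion_free, s.Pp_eq_zero fun j hj => h j hj X Y, smul_zero]

def SpannedBy (G : Fin 3 → Set V.VF) : Prop :=
  ∀ m, (∀ Y ∈ G m, s.P m Y = Y) ∧ ∀ Z, s.P m Z ∈ Submodule.span (M → ℝ) (G m)

variable {s} {G : Fin 3 → Set V.VF}

theorem SpannedBy.g_eq_zero (hG : s.SpannedBy G) {i j : Fin 3} (h : i ≠ j) {Y Z : V.VF}
    (hY : Y ∈ G i) (hZ : Z ∈ G j) : gm.g Y Z = 0 := by
  rw [← (hG i).1 Y hY, ← (hG j).1 Z hZ, s.g_P_P h]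

theorem SpannedBy.P_nabla_eq_zero (hG : s.SpannedBy G) {i j k : Fin 3} (hjk : j ≠ k)
    (h : ∀ X ∈ G i, ∀ Y ∈ G j, ∀ Z ∈ G k, gm.g (gm.nabla X Y) Z = 0) (X Y : V.VF) :
    s.P k (gm.nabla (s.P i X) (s.P j Y)) = 0 :=
  s.P_eq_zero_of_mem_span (hG k).2 fun Z hZ =>
    gm.g_nabla_eq_zero_of_mem_span (fun _ hY => hG.g_eq_zero hjk hY hZ)
      (fun X hX Y hY => h X hX Y hY Z hZ) ((hG i).2 X) ((hG j).2 Y)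

theorem SpannedBy.P_bracket_eq_zero (hG : s.SpannedBy G) {i j : Fin 3} (hij : i ≠ j)
    (h : ∀ X ∈ G i, ∀ Y ∈ G i, ∀ Z ∈ G j, gm.g (V.bracket X Y) Z = 0) (X Y : V.VF) :
    s.P j (V.bracket (s.P i X) (s.P i Y)) = 0 :=
  s.P_eq_zero_of_mem_span (hG j).2 fun Z hZ =>
    gm.g_bracket_eq_zero_of_mem_span (fun _ hX => hG.g_eq_zero hij hX hZ)
      (fun _ hY => hG.g_eq_zero hij hY hZ) (fun X hX Y hY => h X hX Y hY Z hZ)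
      ((hG i).2 X) ((hG i).2 Y)

end Split3

section ProductLifts

variable {F B : Type} {Vf : SmoothVF F} {Vb : SmoothVF B} {Vm : SmoothVF (F × B)}
  {gF : RMetric Vf} {gm : RMetric Vm} {liftF : Vf.VF → Vm.VF} {liftB : Vb.VF → Vm.VF}

theorem nabla_liftB_liftF (hbrFB : ∀ X Y, Vm.bracket (liftF X) (liftB Y) = 0)
    (A : Vf.VF) (ξ : Vb.VF) : gm.nabla (liftB ξ) (liftF A) = gm.nabla (liftF A) (liftB ξ) :=
  (sub_eq_zero.mp ((gm.torsion_free _ _).trans (hbrFB A ξ))).symm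

theorem g_nabla_liftF_liftB_liftF
    (hbrFF : ∀ X Y, Vm.bracket (liftF X) (liftF Y) = liftF (Vf.bracket X Y))
    (hbrFB : ∀ X Y, Vm.bracket (liftF X) (liftB Y) = 0)
    (hgFF : ∀ X Y, gm.g (liftF X) (liftF Y) = fun q => gF.g X Y q.1)
    (hgFB : ∀ X Y, gm.g (liftF X) (liftB Y) = 0)
    (hddBF : ∀ X (φ : F → ℝ), Vm.dd (liftB X) (fun q => φ q.1) = 0) (A : Vf.VF) (ξ : Vb.VF)
    (C : Vf.VF) : gm.g (gm.nabla (liftF A) (liftB ξ)) (liftF C) = 0 := by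
  have h₁ := gm.metric_compat (liftF A) (liftF C) (liftB ξ)
  have h₂ := gm.metric_compat (liftF C) (liftF A) (liftB ξ)
  have h₃ := gm.metric_compat (liftB ξ) (liftF A) (liftF C)
  have h₄ := congrArg (gm.g · (liftB ξ)) (gm.torsion_free (liftF A) (liftF C))
  rw [hgFB, SmoothVF.dd_zero, gm.g_symm (liftF C)] at h₁
  rw [hgFB, SmoothVF.dd_zero, gm.g_symm (liftF A)] at h₂
  rw [hgFF, hddBF ξ (gF.g A C), nabla_liftB_liftF hbrFB, nabla_liftB_liftF hbrFB,
    gm.g_symm (liftF A)] at h₃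
  simp only [gm.g_sub_left, hbrFF, hgFB] at h₄
  -- with `a = g(∇_A ξ, C)` and `c = g(∇_C ξ, A)`: `h₃` reads `a + c = 0`
  -- and `h₁, h₂, h₄` together give `a = c`
  funext q
  have := congrFun h₁ q
  have := congrFun h₂ q
  have := congrFun h₃ q
  have := congrFun h₄ q
  simp only [Pi.add_apply, Pi.sub_apply, Pi.zero_apply] at *
  linarith

theorem g_nabla_liftF_liftF_liftB
    (hbrFF : ∀ X Y, Vm.bracket (liftF X) (liftF Y) = liftF (Vf.bracket X Y))
    (hbrFB : ∀ X Y, Vm.bracket (liftF X) (liftB Y) = 0)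
    (hgFF : ∀ X Y, gm.g (liftF X) (liftF Y) = fun q => gF.g X Y q.1)
    (hgFB : ∀ X Y, gm.g (liftF X) (liftB Y) = 0)
    (hddBF : ∀ X (φ : F → ℝ), Vm.dd (liftB X) (fun q => φ q.1) = 0) (A C : Vf.VF)
    (ξ : Vb.VF) : gm.g (gm.nabla (liftF A) (liftF C)) (liftB ξ) = 0 := by
  have h := gm.metric_compat (liftF A) (liftF C) (liftB ξ)
  rwa [hgFB, SmoothVF.dd_zero, gm.g_symm (liftF C),
    g_nabla_liftF_liftB_liftF hbrFF hbrFB hgFF hgFB hddBF, add_zero, eq_comm] at h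

theorem g_nabla_liftB_liftF_liftF
    (hbrFF : ∀ X Y, Vm.bracket (liftF X) (liftF Y) = liftF (Vf.bracket X Y))
    (hbrFB : ∀ X Y, Vm.bracket (liftF X) (liftB Y) = 0)
    (hgFF : ∀ X Y, gm.g (liftF X) (liftF Y) = fun q => gF.g X Y q.1)
    (hgFB : ∀ X Y, gm.g (liftF X) (liftB Y) = 0)
    (hddBF : ∀ X (φ : F → ℝ), Vm.dd (liftB X) (fun q => φ q.1) = 0) (ξ : Vb.VF)
    (A C : Vf.VF) : gm.g (gm.nabla (liftB ξ) (liftF A)) (liftF C) = 0 := by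
  rw [nabla_liftB_liftF hbrFB, g_nabla_liftF_liftB_liftF hbrFF hbrFB hgFF hgFB hddBF]

theorem mem_span_lifts
    (hspan : ∀ Z : Vm.VF, ∃ (n : ℕ) (φ : Fin n → (F × B → ℝ)) (W : Fin n → Vm.VF),
      (∀ k, (∃ X, W k = liftF X) ∨ (∃ X, W k = liftB X)) ∧ Z = ∑ k, Vm.fsmul (φ k) (W k))
    (Z : Vm.VF) : Z ∈ Submodule.span (F × B → ℝ) (Set.range liftF ∪ Set.range liftB) := by
  obtain ⟨n, φ, W, hW, rfl⟩ := hspan Z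
  refine Submodule.sum_mem _ fun k _ => Submodule.smul_mem _ (φ k) (Submodule.subset_span ?_)
  rcases hW k with ⟨X, hX⟩ | ⟨X, hX⟩
  · exact Or.inl ⟨X, hX.symm⟩
  · exact Or.inr ⟨X, hX.symm⟩

theorem spannedBy_lifts (s : Split3 gm) (Q : Fin 2 → Vf.VF → Vf.VF)
    (hQidem : ∀ i X, Q i (Q i X) = Q i X)
    (hP0 : ∀ X, s.P 0 (liftF X) = liftF (Q 0 X))
    (hP1 : ∀ X, s.P 1 (liftF X) = liftF (Q 1 X))
    (hP2F : ∀ X, s.P 2 (liftF X) = 0)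
    (hP2B : ∀ X, s.P 2 (liftB X) = liftB X)
    (hspan : ∀ Z : Vm.VF, ∃ (n : ℕ) (φ : Fin n → (F × B → ℝ)) (W : Fin n → Vm.VF),
      (∀ k, (∃ X, W k = liftF X) ∨ (∃ X, W k = liftB X)) ∧ Z = ∑ k, Vm.fsmul (φ k) (W k)) :
    s.SpannedBy ![Set.range fun A => liftF (Q 0 A), Set.range fun A => liftF (Q 1 A),
      Set.range liftB] := by
  have hB : ∀ i, i ≠ 2 → ∀ ξ, s.P i (liftB ξ) = 0 := fun i hi ξ => by
    rw [← hP2B ξ, s.P_orth i 2 _ hi]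
  intro m
  fin_cases m <;> refine ⟨?_, s.P_mem_span (mem_span_lifts hspan) ?_⟩ <;>
    simp only [Fin.zero_eta, Fin.mk_one, Fin.reduceFinMk, Matrix.cons_val]
  · rintro _ ⟨A, rfl⟩
    rw [hP0, hQidem]
  · rintro _ (⟨X, rfl⟩ | ⟨ξ, rfl⟩)
    · rw [hP0]
      exact Submodule.subset_span ⟨X, rfl⟩
    · rw [hB 0 (by decide)]
      exact Submodule.zero_mem _
  · rintro _ ⟨A, rfl⟩
    rw [hP1, hQidem]
  · rintro _ (⟨X, rfl⟩ | ⟨ξ, rfl⟩)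
    · rw [hP1]
      exact Submodule.subset_span ⟨X, rfl⟩
    · rw [hB 1 (by decide)]
      exact Submodule.zero_mem _
  · rintro _ ⟨ξ, rfl⟩
    exact hP2B ξ
  · rintro _ (⟨X, rfl⟩ | ⟨ξ, rfl⟩)
    · rw [hP2F]
      exact Submodule.zero_mem _
    · rw [hP2B]
      exact Submodule.subset_span ⟨ξ, rfl⟩

end ProductLifts

theorem twisted_product_mixed_integrable_mixed_totally_geodesic_general
    (F B : Type) (Vf : SmoothVF F) (Vb : SmoothVF B) (Vm : SmoothVF (F × B))
    (gF : RMetric Vf) (gm : RMetric Vm)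
    -- the orthoprojectors onto N₁ and N₂ on F
    (Q : Fin 2 → Vf.VF → Vf.VF)
    (hQidem : ∀ i X, Q i (Q i X) = Q i X)
    (hQselfadj : ∀ i X Y, gF.g (Q i X) Y = gF.g X (Q i Y))
    -- the three distributions D₁, D₂, D₃ on M = F × B
    (s : Split3 gm)
    -- horizontal and vertical lifts of vector fields
    (liftF : Vf.VF → Vm.VF) (liftB : Vb.VF → Vm.VF)
    (hbrFF : ∀ X Y, Vm.bracket (liftF X) (liftF Y) = liftF (Vf.bracket X Y))
    (hbrBB : ∀ X Y, Vm.bracket (liftB X) (liftB Y) = liftB (Vb.bracket X Y))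
    (hbrFB : ∀ X Y, Vm.bracket (liftF X) (liftB Y) = 0)
    -- the twisted product metric g = g_F + e^{2f} g_B
    (hgFF : ∀ X Y, gm.g (liftF X) (liftF Y) = fun q => gF.g X Y q.1)
    (hgFB : ∀ X Y, gm.g (liftF X) (liftB Y) = 0)
    (hddBF : ∀ X (φ : F → ℝ), Vm.dd (liftB X) (fun q => φ q.1) = 0)
    -- D₁, D₂ are the lifts of N₁, N₂, and D₃ is the lift of TB
    (hP0 : ∀ X, s.P 0 (liftF X) = liftF (Q 0 X))
    (hP1 : ∀ X, s.P 1 (liftF X) = liftF (Q 1 X))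
    (hP2F : ∀ X, s.P 2 (liftF X) = 0)
    (hP2B : ∀ X, s.P 2 (liftB X) = liftB X)
    -- every vector field on M is a functional combination of lifted fields
    (hspan : ∀ Z : Vm.VF, ∃ (n : ℕ) (φ : Fin n → (F × B → ℝ)) (W : Fin n → Vm.VF),
        (∀ k, (∃ X, W k = liftF X) ∨ (∃ X, W k = liftB X))
        ∧ Z = ∑ k, Vm.fsmul (φ k) (W k)) :
    ((∀ X Y, s.mT 2 0 1 X Y = 0) ∧ (∀ X Y, s.mT 1 0 2 X Y = 0) ∧ (∀ X Y, s.mT 0 1 2 X Y = 0)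
      ∧ (∀ X Y, s.mh 2 0 1 X Y = 0) ∧ (∀ X Y, s.mh 1 0 2 X Y = 0) ∧ (∀ X Y, s.mh 0 1 2 X Y = 0))
    ∧ ((∀ X Y, Q 1 (Vf.bracket (Q 0 X) (Q 0 Y)) = 0) →
        (∀ X Y, Q 0 (Vf.bracket (Q 1 X) (Q 1 Y)) = 0) →
        ∀ (i : Fin 3) X Y, s.T i X Y = 0) := by
  have hG := spannedBy_lifts s Q hQidem hP0 hP1 hP2F hP2B hspan
  have hFFB := g_nabla_liftF_liftF_liftB hbrFF hbrFB hgFF hgFB hddBF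
  have hFBF := g_nabla_liftF_liftB_liftF hbrFF hbrFB hgFF hgFB hddBF
  have hBFF := g_nabla_liftB_liftF_liftF hbrFF hbrFB hgFF hgFB hddBF
  have hgBF : ∀ ξ X, gm.g (liftB ξ) (liftF X) = 0 := fun ξ X => by rw [gm.g_symm, hgFB]
  have hN : ∀ i j : Fin 2, (∀ X Y, Q j (Vf.bracket (Q i X) (Q i Y)) = 0) →
      ∀ A C D, gm.g (liftF (Vf.bracket (Q i A) (Q i C))) (liftF (Q j D)) = 0 := by
    intro i j h A C D
    rw [hgFF, ← hQselfadj, h, gF.g_zero_left]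
    rfl
  refine ⟨s.mixed_integrable_and_mixed_totally_geodesic fun i j k hij hik hjk =>
      hG.P_nabla_eq_zero hjk ?_,
    fun h₀ h₁ i => s.T_eq_zero fun j hji => hG.P_bracket_eq_zero (Ne.symm hji) ?_⟩
  · fin_cases i <;> fin_cases j <;> fin_cases k <;> simp [hFFB, hFBF, hBFF] at hij hik hjk ⊢
  · fin_cases i <;> fin_cases j <;> simp [hN 0 1 h₀, hN 1 0 h₁, hbrFF, hbrBB, hgFB, hgBF] at hji ⊢

/-- On a twisted product `M = F × B` with metric
`g = g_F + e^{2f} g_B`, the lifts `D₁, D₂` of complementary orthogonal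
distributions `N₁, N₂` on `F` and the lift `D₃` of `TB` are pairwise mixed
integrable and pairwise mixed totally geodesic; if moreover `N₁` and `N₂` are
integrable, then `D₁, D₂, D₃` are all integrable. -/
theorem twisted_product_mixed_integrable_mixed_totally_geodesic
    (F B : Type) (Vf : SmoothVF F) (Vb : SmoothVF B) (Vm : SmoothVF (F × B))
    (gF : RMetric Vf) (gB : RMetric Vb) (gm : RMetric Vm)
    (f : F × B → ℝ)
    -- the orthoprojectors onto N₁ and N₂ on F
    (Q : Fin 2 → Vf.VF → Vf.VF)
    (hQadd : ∀ i X Y, Q i (X + Y) = Q i X + Q i Y)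
    (hQidem : ∀ i X, Q i (Q i X) = Q i X)
    (hQorth : ∀ i j X, i ≠ j → Q i (Q j X) = 0)
    (hQsum : ∀ X, Q 0 X + Q 1 X = X)
    (hQselfadj : ∀ i X Y, gF.g (Q i X) Y = gF.g X (Q i Y))
    -- the three distributions D₁, D₂, D₃ on M = F × B
    (s : Split3 gm)
    -- horizontal and vertical lifts of vector fields
    (liftF : Vf.VF → Vm.VF) (liftB : Vb.VF → Vm.VF)
    (hlF_add : ∀ X Y, liftF (X + Y) = liftF X + liftF Y)
    (hlB_add : ∀ X Y, liftB (X + Y) = liftB X + liftB Y)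
    (hlF_fsmul : ∀ (φ : F → ℝ) X, liftF (Vf.fsmul φ X) = Vm.fsmul (fun q => φ q.1) (liftF X))
    (hlB_fsmul : ∀ (ψ : B → ℝ) X, liftB (Vb.fsmul ψ X) = Vm.fsmul (fun q => ψ q.2) (liftB X))
    (hbrFF : ∀ X Y, Vm.bracket (liftF X) (liftF Y) = liftF (Vf.bracket X Y))
    (hbrBB : ∀ X Y, Vm.bracket (liftB X) (liftB Y) = liftB (Vb.bracket X Y))
    (hbrFB : ∀ X Y, Vm.bracket (liftF X) (liftB Y) = 0)
    -- the twisted product metric g = g_F + e^{2f} g_B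
    (hgFF : ∀ X Y, gm.g (liftF X) (liftF Y) = fun q => gF.g X Y q.1)
    (hgBB : ∀ X Y, gm.g (liftB X) (liftB Y) = fun q => Real.exp (2 * f q) * gB.g X Y q.2)
    (hgFB : ∀ X Y, gm.g (liftF X) (liftB Y) = 0)
    (hddF : ∀ X (φ : F → ℝ), Vm.dd (liftF X) (fun q => φ q.1) = fun q => Vf.dd X φ q.1)
    (hddB : ∀ X (ψ : B → ℝ), Vm.dd (liftB X) (fun q => ψ q.2) = fun q => Vb.dd X ψ q.2)
    (hddFB : ∀ X (ψ : B → ℝ), Vm.dd (liftF X) (fun q => ψ q.2) = 0)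
    (hddBF : ∀ X (φ : F → ℝ), Vm.dd (liftB X) (fun q => φ q.1) = 0)
    -- D₁, D₂ are the lifts of N₁, N₂, and D₃ is the lift of TB
    (hP0 : ∀ X, s.P 0 (liftF X) = liftF (Q 0 X))
    (hP1 : ∀ X, s.P 1 (liftF X) = liftF (Q 1 X))
    (hP2F : ∀ X, s.P 2 (liftF X) = 0)
    (hP2B : ∀ X, s.P 2 (liftB X) = liftB X)
    -- every vector field on M is a functional combination of lifted fields
    (hspan : ∀ Z : Vm.VF, ∃ (n : ℕ) (φ : Fin n → (F × B → ℝ)) (W : Fin n → Vm.VF),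
        (∀ k, (∃ X, W k = liftF X) ∨ (∃ X, W k = liftB X))
        ∧ Z = ∑ k, Vm.fsmul (φ k) (W k)) :
    ((∀ X Y, s.mT 2 0 1 X Y = 0) ∧ (∀ X Y, s.mT 1 0 2 X Y = 0) ∧ (∀ X Y, s.mT 0 1 2 X Y = 0)
      ∧ (∀ X Y, s.mh 2 0 1 X Y = 0) ∧ (∀ X Y, s.mh 1 0 2 X Y = 0) ∧ (∀ X Y, s.mh 0 1 2 X Y = 0))
    ∧ ((∀ X Y, Q 1 (Vf.bracket (Q 0 X) (Q 0 Y)) = 0) →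
        (∀ X Y, Q 0 (Vf.bracket (Q 1 X) (Q 1 Y)) = 0) →
        ∀ (i : Fin 3) X Y, s.T i X Y = 0) :=
  twisted_product_mixed_integrable_mixed_totally_geodesic_general F B Vf Vb Vm gF gm Q hQidem
    hQselfadj s liftF liftB hbrFF hbrBB hbrFB hgFF hgFB hddBF hP0 hP1 hP2F hP2B hspan
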